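/- Fix integers d ≥ 2 and 1 ≤ k < d, and a real number p ≥ 1 with θ = 1/p. Let the coefficients a_i^{(k)} be defined by the stated recursion. Then for every c ∈ [0,1]: Σ_{i=1}^{k} a_i^{(k)} · ((d-1)!/((k-i)!·(d-k-2+i)!)) · ∫_{c^θ}^{1} (1 - c/x^p)^{k-1} · x^{k-i} (1-x)^{d-k-2+i} dx = (1 - c^θ)^{d-1}. (That is, the mixture F_d^k = Σ_{i=1}^k a_i^{(k)} Beta(k+1-i, d-k-1+i) satisfies the Williamson-type integral equation ∫_{c^θ}^1 (1 - c/x^p)^{k-1} dF_d^k(x) = (1-c^θ)^{d-1}.) -/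

import Mathlib

/-!
Write `t = c ^ (1/p)` and `u x = 1 - c / x ^ p`, so that `u' = p (1 - u) / x`. Differentiating
`u ^ (j+1) x ^ (m+1) (1-x) ^ (n+1)`, which vanishes at `t` and at `1`, therefore gives a linear
relation between the transforms `J j m n = ∫_t^1 u ^ j dBeta(m+1, n+1)`:
`J j m (n+1) = (1 - α) J (j+1) m (n+1) + α J (j+1) (m+1) n` with `α = (m+1) / ((j+1) p)`.
This is the recursion defining `a^(k+1)` read backwards, so `F_d^(k+1)` and `F_d^k` have the same
transform, and `F_d^1 = Beta(1, d-1)` has transform `∫_t^1 (d-1) (1-x)^(d-2) dx = (1-t)^(d-1)`.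
-/

open MeasureTheory Finset

lemma continuousOn_one_sub_div_rpow {p c : ℝ} (hp : 0 < p) (hc : 0 ≤ c) :
    ContinuousOn (fun x : ℝ => 1 - c / x ^ p) (Set.Ici (c ^ (1 / p))) := by
  refine continuousOn_const.sub ?_
  rcases hc.eq_or_lt with rfl | hc
  · simpa using continuousOn_const
  · refine continuousOn_const.div (Real.continuous_rpow_const hp.le).continuousOn fun x hx => ?_
    exact (Real.rpow_pos_of_pos ((Real.rpow_pos_of_pos hc _).trans_le hx) p).ne'

lemma hasDerivAt_one_sub_div_rpow {p c x : ℝ} (hx : 0 < x) :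
    HasDerivAt (fun x : ℝ => 1 - c / x ^ p) (p * (1 - (1 - c / x ^ p)) / x) x := by
  have hxp : x ^ p ≠ 0 := (Real.rpow_pos_of_pos hx p).ne'
  refine (((hasDerivAt_const x c).div (Real.hasDerivAt_rpow_const (p := p) (Or.inl hx.ne'))
    hxp).const_sub 1).congr_deriv ?_
  rw [Real.rpow_sub_one hx.ne']
  field_simp
  ring

lemma hasDerivAt_one_sub_div_rpow_pow_mul_pow_mul_pow {p c x : ℝ} (hx : 0 < x) (j m n : ℕ) :
    HasDerivAt (fun x : ℝ => (1 - c / x ^ p) ^ (j + 1) * x ^ (m + 1) * (1 - x) ^ (n + 1))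
      ((j + 1) * p * ((1 - c / x ^ p) ^ j * x ^ m * (1 - x) ^ (n + 1))
        - (j + 1) * p * ((1 - c / x ^ p) ^ (j + 1) * x ^ m * (1 - x) ^ (n + 1))
        + (m + 1) * ((1 - c / x ^ p) ^ (j + 1) * x ^ m * (1 - x) ^ (n + 1))
        - (n + 1) * ((1 - c / x ^ p) ^ (j + 1) * x ^ (m + 1) * (1 - x) ^ n)) x := by
  refine ((((hasDerivAt_one_sub_div_rpow hx).pow (j + 1)).mul (hasDerivAt_pow (m + 1) x)).mul
    (((hasDerivAt_id x).const_sub 1).pow (n + 1))).congr_deriv ?_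
  simp only [Pi.pow_apply, Pi.mul_apply, id]
  generalize 1 - c / x ^ p = u
  field_simp
  push_cast
  ring

noncomputable def williamsonIntegral (p c : ℝ) (j m n : ℕ) : ℝ :=
  ∫ x in c ^ (1 / p)..1, (1 - c / x ^ p) ^ j * x ^ m * (1 - x) ^ n

lemma williamsonIntegral_ibp {p c : ℝ} (hp : 0 < p) (hc0 : 0 ≤ c) (hc1 : c ≤ 1)
    (j m n : ℕ) :
    (j + 1) * p * williamsonIntegral p c j m (n + 1)
        + (m + 1) * williamsonIntegral p c (j + 1) m (n + 1)
      = (j + 1) * p * williamsonIntegral p c (j + 1) m (n + 1)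
        + (n + 1) * williamsonIntegral p c (j + 1) (m + 1) n := by
  set t := c ^ (1 / p)
  have ht0 : 0 ≤ t := Real.rpow_nonneg hc0 _
  have ht1 : t ≤ 1 := Real.rpow_le_one hc0 hc1 (by positivity)
  have hcont (j m n : ℕ) :
      ContinuousOn (fun x : ℝ => (1 - c / x ^ p) ^ j * x ^ m * (1 - x) ^ n) (Set.Icc t 1) :=
    ((((continuousOn_one_sub_div_rpow hp hc0).mono Set.Icc_subset_Ici_self).pow j).mul
      (continuousOn_pow m)).mul ((continuousOn_const.sub continuousOn_id).pow n)
  have hint (j m n : ℕ) := ((hcont j m n).intervalIntegrable_of_Icc ht1 :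
      IntervalIntegrable (fun x : ℝ => (1 - c / x ^ p) ^ j * x ^ m * (1 - x) ^ n) volume t 1)
  have hboundary : (1 - c / t ^ p) ^ (j + 1) * t ^ (m + 1) * (1 - t) ^ (n + 1) = 0 := by
    rcases hc0.eq_or_lt with rfl | hc
    · simp [t, hp.ne']
    · have htp : t ^ p = c := by simp only [t, one_div, Real.rpow_inv_rpow hc0 hp.ne']
      simp [htp, hc.ne']
  have hFTC := intervalIntegral.integral_eq_sub_of_hasDerivAt_of_le ht1
    (hcont (j + 1) (m + 1) (n + 1))
    (fun x hx => hasDerivAt_one_sub_div_rpow_pow_mul_pow_mul_pow (ht0.trans_lt hx.1) j m n)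
    (by apply_rules [IntervalIntegrable.sub, IntervalIntegrable.add, IntervalIntegrable.const_mul])
  rw [intervalIntegral.integral_sub, intervalIntegral.integral_add, intervalIntegral.integral_sub,
    intervalIntegral.integral_const_mul, intervalIntegral.integral_const_mul,
    intervalIntegral.integral_const_mul, intervalIntegral.integral_const_mul, hboundary] at hFTC
  · simp only [williamsonIntegral]
    norm_num at hFTC
    linarith
  all_goals apply_rules [IntervalIntegrable.sub, IntervalIntegrable.add,
    IntervalIntegrable.const_mul]

/-- `∫_{c^(1/p)}^1 (1 - c/x^p)^j dBeta(m+1, n+1)(x)`. -/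
noncomputable def williamsonBeta (p c : ℝ) (j m n : ℕ) : ℝ :=
  ((m + n + 1).factorial : ℝ) / (m.factorial * n.factorial) * williamsonIntegral p c j m n

lemma williamsonBeta_zero_zero (p c : ℝ) (n : ℕ) :
    williamsonBeta p c 0 0 n = (1 - c ^ (1 / p)) ^ (n + 1) := by
  have hn : (n.factorial : ℝ) ≠ 0 := by positivity
  simp only [williamsonBeta, williamsonIntegral, pow_zero, one_mul, zero_add,
    intervalIntegral.integral_comp_sub_left (fun x : ℝ => x ^ n), sub_self, integral_pow,
    Nat.factorial_succ, Nat.factorial_zero]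
  push_cast
  field_simp
  ring

lemma williamsonBeta_pascal {p c : ℝ} (hp : 0 < p) (hc0 : 0 ≤ c) (hc1 : c ≤ 1) (j m n : ℕ) :
    williamsonBeta p c j m (n + 1)
      = (1 - (m + 1) / ((j + 1) * p)) * williamsonBeta p c (j + 1) m (n + 1)
        + (m + 1) / ((j + 1) * p) * williamsonBeta p c (j + 1) (m + 1) n := by
  have hibp := williamsonIntegral_ibp hp hc0 hc1 j m n
  simp only [williamsonBeta, show m + 1 + n + 1 = m + (n + 1) + 1 by ring, Nat.factorial_succ]
  push_cast
  field_simp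
  linear_combination hibp

lemma sum_Icc_one_eq_sum_range {M : Type*} [AddCommMonoid M] (f : ℕ → M) (n : ℕ) :
    ∑ i ∈ Icc 1 n, f i = ∑ i ∈ range n, f (i + 1) := by
  rw [range_eq_Ico, sum_Ico_add', ← Ico_add_one_right_eq_Icc]

/-- `∫_{c^(1/p)}^1 (1 - c/x^p)^(k-1) dF(x)` for the mixture
`F = Σ_{i=1}^k w i • Beta(k+1-i, d-k-1+i)`; the natural-number indices do not truncate as long
as `1 ≤ i ≤ k < d`. -/
noncomputable def williamsonMixture (p c : ℝ) (d k : ℕ) (w : ℕ → ℝ) : ℝ :=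
  ∑ i ∈ Icc 1 k, w i * williamsonBeta p c (k - 1) (k - i) (d + i - k - 2)

lemma williamsonMixture_succ {p c : ℝ} (hp : 0 < p) (hc0 : 0 ≤ c) (hc1 : c ≤ 1) {d k : ℕ}
    (hk : 1 ≤ k) (hkd : k + 2 ≤ d) (u v : ℕ → ℝ) (hu0 : u 0 = 0) (hutop : u (k + 1) = 0)
    (hv : ∀ i, 1 ≤ i → i ≤ k + 1 →
      v i = u i * (1 / p * ((k : ℝ) + 1 - (i : ℝ)) / (k : ℝ))
        + u (i - 1) * (1 - 1 / p * ((k : ℝ) + 1 - (i : ℝ) + 1) / (k : ℝ))) :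
    williamsonMixture p c d (k + 1) v = williamsonMixture p c d k u := by
  have hsplit : ∀ i ∈ range (k + 1),
      v (i + 1) * williamsonBeta p c (k + 1 - 1) (k + 1 - (i + 1)) (d + (i + 1) - (k + 1) - 2)
        = u (i + 1) * ((k - i) / (k * p) * williamsonBeta p c k (k - i) (d + i - k - 2))
          + u i * ((1 - (k + 1 - i) / (k * p)) * williamsonBeta p c k (k - i) (d + i - k - 2)) := by
    intro i hi
    rw [hv (i + 1) (by omega) (by simpa using hi), Nat.add_sub_cancel, Nat.add_sub_cancel,
      Nat.add_sub_add_right, show d + (i + 1) - (k + 1) - 2 = d + i - k - 2 by omega]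
    push_cast
    ring
  unfold williamsonMixture
  rw [sum_Icc_one_eq_sum_range, sum_Icc_one_eq_sum_range, sum_congr rfl hsplit,
    sum_add_distrib, sum_range_succ, sum_range_succ', hutop, hu0, zero_mul, zero_mul, add_zero,
    add_zero, ← sum_add_distrib]
  refine sum_congr rfl fun i hi => ?_
  have hi : i < k := mem_range.mp hi
  obtain ⟨m, n, rfl, rfl⟩ : ∃ m n, k = m + i + 1 ∧ d = m + n + 3 :=
    ⟨k - i - 1, d - k + i - 2, by omega, by omega⟩
  rw [show m + i + 1 - i = m + 1 by omega, show m + n + 3 + i - (m + i + 1) - 2 = n by omega,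
    show m + i + 1 - (i + 1) = m by omega,
    show m + n + 3 + (i + 1) - (m + i + 1) - 2 = n + 1 by omega,
    Nat.add_sub_cancel, williamsonBeta_pascal hp hc0 hc1 (m + i) m n]
  push_cast
  field_simp
  ring

theorem williamson_transform_of_mixture_k_general
    (d k : ℕ) (hk1 : 1 ≤ k) (hkd : k < d)
    (p θ : ℝ) (hp : 1 ≤ p) (hθ : θ = 1 / p)
    (a : ℕ → ℕ → ℝ)
    (hzero : ∀ m, a m 0 = 0)
    (htop : ∀ m, a m (m + 1) = 0)
    (hinit : a 1 1 = 1)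
    (hrec : ∀ m i, 1 ≤ m → 1 ≤ i → i ≤ m + 1 →
      a (m + 1) i = a m i * (θ * ((m : ℝ) + 1 - (i : ℝ)) / (m : ℝ))
        + a m (i - 1) * (1 - θ * ((m : ℝ) + 1 - (i : ℝ) + 1) / (m : ℝ))) :
    ∀ c ∈ Set.Icc (0 : ℝ) 1,
      ∑ i ∈ Finset.Icc 1 k,
          a k i * ((Nat.factorial (d - 1) : ℝ) /
              ((Nat.factorial (k - i) : ℝ) * (Nat.factorial (d + i - k - 2) : ℝ)))
            * ∫ x in (c ^ θ)..1,
                (1 - c / x ^ p) ^ (k - 1) * x ^ (k - i) * (1 - x) ^ (d + i - k - 2)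
      = (1 - c ^ θ) ^ (d - 1) := by
  rintro c ⟨hc0, hc1⟩
  subst hθ
  have hp0 : 0 < p := by linarith
  have hmixture : ∀ l, 1 ≤ l → l < d →
      williamsonMixture p c d l (a l) = (1 - c ^ (1 / p)) ^ (d - 1) := by
    intro l hl
    induction l, hl using Nat.le_induction with
    | base =>
      intro hd
      rw [williamsonMixture, Icc_self, sum_singleton, hinit, one_mul, Nat.sub_self,
        williamsonBeta_zero_zero, show d + 1 - 1 - 2 + 1 = d - 1 by omega]
    | succ l hl ih =>
      intro hld
      rw [williamsonMixture_succ hp0 hc0 hc1 hl (by omega) (a l) (a (l + 1)) (hzero l) (htop l)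
        (hrec l · hl), ih (by omega)]
  rw [← hmixture k hk1 hkd, williamsonMixture]
  refine sum_congr rfl fun i hi => ?_
  rw [williamsonBeta, williamsonIntegral, show k - i + (d + i - k - 2) + 1 = d - 1 by
    have := mem_Icc.mp hi; omega]
  ring

/-- For `1 ≤ k < d`, the mixture `F_d^k = Σ_{i=1}^k a_i^{(k)} Beta(k+1-i, d-k-1+i)`
satisfies the Williamson-type integral equation
`∫_{c^θ}^1 (1 - c/x^p)^{k-1} dF_d^k(x) = (1-c^θ)^{d-1}`. -/
theorem williamson_transform_of_mixture_k
    (d k : ℕ) (hd : 2 ≤ d) (hk1 : 1 ≤ k) (hkd : k < d)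
    (p θ : ℝ) (hp : 1 ≤ p) (hθ : θ = 1 / p)
    (a : ℕ → ℕ → ℝ)
    (hzero : ∀ m, a m 0 = 0)
    (htop : ∀ m, a m (m + 1) = 0)
    (hinit : a 1 1 = 1)
    (hrec : ∀ m i, 1 ≤ m → 1 ≤ i → i ≤ m + 1 →
      a (m + 1) i = a m i * (θ * ((m : ℝ) + 1 - (i : ℝ)) / (m : ℝ))
        + a m (i - 1) * (1 - θ * ((m : ℝ) + 1 - (i : ℝ) + 1) / (m : ℝ))) :
    ∀ c ∈ Set.Icc (0 : ℝ) 1,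
      ∑ i ∈ Finset.Icc 1 k,
          a k i * ((Nat.factorial (d - 1) : ℝ) /
              ((Nat.factorial (k - i) : ℝ) * (Nat.factorial (d + i - k - 2) : ℝ)))
            * ∫ x in (c ^ θ)..1,
                (1 - c / x ^ p) ^ (k - 1) * x ^ (k - i) * (1 - x) ^ (d + i - k - 2)
      = (1 - c ^ θ) ^ (d - 1) :=
  williamson_transform_of_mixture_k_general d k hk1 hkd p θ hp hθ a hzero htop hinit hrec
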